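/- In the field ℚ(x,q) of rational functions in two indeterminates x and q, for all nonnegative integers m and n: Σ_{λ ⊆ B(m,n)} x^{dist(λ)} · q^{|λ|} = Σ_{i=0}^{m} q^{i(i+1)/2} · [n choose i]_q · [n+m−i choose m−i]_q · (x−1)^i, where the left-hand sum ranges over all partitions λ fitting in the m×n box B(m,n). -/

import Mathlib

/-- The polynomials `T_k(t,q)` defined by `T_0 = 1` and, for `k ≥ 1`,
`T_k = T_{k-1} + (1+t)(-q)^{k²} + (1-t²) ∑_{i=1}^{k-1} (-q)^{k²-i²} T_{i-1}`
(below the sum is reindexed by `i ↦ i+1`). -/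
def T {R : Type*} [CommRing R] (t q : R) : ℕ → R
  | 0 => 1
  | (k+1) => T t q k + (1 + t) * (-q) ^ ((k+1)^2) +
      (1 - t^2) * ∑ i ∈ (Finset.range k).attach,
        (-q) ^ ((k+1)^2 - (i.1+1)^2) * T t q i.1
decreasing_by
  · exact Nat.lt_succ_self k
  · exact Nat.lt_succ_of_lt (Finset.mem_range.mp i.2)

/-- `f n h` with `f 0 0 = 1`, `f 0 h = 0` for `h ≥ 1`, `f n h = 0` for `h < 0`, and
`f n h = (1-q^h) f (n-1) (h-1) + (1-t q^{h+1}) f (n-1) (h+1)`; at `h = 0` the first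
term vanishes since `1 - q^0 = 0`. -/
def f {R : Type*} [CommRing R] (t q : R) : ℕ → ℕ → R
  | 0, h => if h = 0 then 1 else 0
  | (n+1), 0 => (1 - t * q) * f t q n 1
  | (n+1), (h+1) => (1 - q^(h+1)) * f t q n h + (1 - t * q^(h+2)) * f t q n (h+2)

/-- `Ẽ_n(t,q) = f(2n,0)`, which is `(1-q)^{2n}` times the `(t,q)`-Euler number. -/
def Etilde {R : Type*} [CommRing R] (t q : R) (n : ℕ) : R := f t q (2*n) 0

/-- Binomial coefficient with integer lower index, `0` when the lower index is negative. -/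
def binom (n : ℕ) (m : ℤ) : ℤ := if 0 ≤ m then (n.choose m.toNat : ℤ) else 0

/-- q-Pochhammer symbol `(a;q)_n = ∏_{j=0}^{n-1} (1 - a q^j)`. -/
def qPoch {K : Type*} [CommRing K] (a q : K) (n : ℕ) : K :=
  ∏ j ∈ Finset.range n, (1 - a * q ^ j)

/-- Gaussian binomial coefficient `[n choose k]_q = (q;q)_n / ((q;q)_k (q;q)_{n-k})`,
equal to `0` whenever `k < 0` or `k > n`. -/
def gauss {K : Type*} [Field K] (q : K) (n k : ℤ) : K :=
  if 0 ≤ k ∧ k ≤ n then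
    qPoch q q n.toNat / (qPoch q q k.toNat * qPoch q q (n - k).toNat)
  else 0

/-- Number of distinct (positive) part sizes of the partition encoded by an
antitone function `Fin m → Fin (n+1)`. -/
def distCard {m n : ℕ} (g : Fin m → Fin (n+1)) : ℕ :=
  ((Finset.univ.image fun i => ((g i : ℕ))).erase 0).card

/-- `∑_{λ ⊆ B(m,n)} x^{dist(λ)} q^{|λ|}`: partitions in the `m × n` box are encoded
as antitone functions `Fin m → Fin (n+1)`. -/
def boxSum {R : Type*} [CommRing R] (x q : R) (m n : ℕ) : R :=
  ∑ g ∈ Finset.univ.filter (fun g : Fin m → Fin (n+1) => ∀ i j : Fin m, i ≤ j → g j ≤ g i),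
    x ^ distCard g * q ^ (∑ i, (g i : ℕ))

/-- The field `ℚ(x,q)` of rational functions in two indeterminates. -/
abbrev Kxq : Type := FractionRing (MvPolynomial (Fin 2) ℚ)

/-- The indeterminate `x` in `ℚ(x,q)`. -/
noncomputable def xV : Kxq := algebraMap (MvPolynomial (Fin 2) ℚ) Kxq (MvPolynomial.X 0)

/-- The indeterminate `q` in `ℚ(x,q)`. -/
noncomputable def qV : Kxq := algebraMap (MvPolynomial (Fin 2) ℚ) Kxq (MvPolynomial.X 1)

/-! Both sides `F m n` satisfy `F 0 n = F m 0 = 1` and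
`F (m+1) (n+1) = F (m+1) n + q^(n+1) * (F m (n+1) + (x-1) * F m n)`.
A partition in the `(m+1) × (n+1)` box either has no part `n+1`, or its largest part is `n+1`;
removing that part leaves an arbitrary partition in the `m × (n+1)` box and lowers the number
of distinct parts by one exactly when no part `n+1` remains. On the right-hand side the
recurrence holds term by term, by the `q`-Pascal rule `[N+1, k] = [N, k] + q^(N+1-k) [N, k-1]`
applied to both Gaussian factors. -/

section Gauss

variable {K : Type*} [Field K] {q : K}

theorem qPoch_succ {R : Type*} [CommRing R] (a q : R) (n : ℕ) :
    qPoch a q (n + 1) = qPoch a q n * (1 - a * q ^ n) :=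
  Finset.prod_range_succ _ _

theorem qPoch_zero {R : Type*} [CommRing R] (a q : R) : qPoch a q 0 = 1 :=
  Finset.prod_range_zero _

theorem one_sub_mul_pow_ne_zero (hq : ¬ IsOfFinOrder q) (j : ℕ) : 1 - q * q ^ j ≠ 0 := by
  rw [sub_ne_zero, ne_comm, ← pow_succ']
  exact fun h => hq (isOfFinOrder_iff_pow_eq_one.2 ⟨j + 1, j.succ_pos, h⟩)

theorem qPoch_self_ne_zero (hq : ¬ IsOfFinOrder q) (n : ℕ) : qPoch q q n ≠ 0 :=
  Finset.prod_ne_zero_iff.2 fun j _ => one_sub_mul_pow_ne_zero hq j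

theorem gauss_of_neg {n k : ℤ} (hk : k < 0) : gauss q n k = 0 :=
  if_neg (by omega)

theorem gauss_of_lt {n k : ℤ} (hk : n < k) : gauss q n k = 0 :=
  if_neg (by omega)

theorem gauss_natCast {n k : ℕ} (hk : k ≤ n) :
    gauss q n k = qPoch q q n / (qPoch q q k * qPoch q q (n - k)) := by
  rw [gauss, if_pos (by omega), Int.toNat_natCast, Int.toNat_natCast, ← Nat.cast_sub hk,
    Int.toNat_natCast]

theorem gauss_zero_right (hq : ¬ IsOfFinOrder q) {n : ℤ} (hn : 0 ≤ n) : gauss q n 0 = 1 := by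
  lift n to ℕ using hn
  rw [← Nat.cast_zero, gauss_natCast n.zero_le, Nat.sub_zero, qPoch_zero, one_mul,
    div_self (qPoch_self_ne_zero hq n)]

theorem gauss_self (hq : ¬ IsOfFinOrder q) (n : ℕ) : gauss q n n = 1 := by
  rw [gauss_natCast le_rfl, Nat.sub_self, qPoch_zero, mul_one, div_self (qPoch_self_ne_zero hq n)]

theorem gauss_succ_left (hq : ¬ IsOfFinOrder q) {n : ℤ} (hn : 0 ≤ n) (k : ℤ) :
    gauss q (n + 1) k = gauss q n k + q ^ (n + 1 - k).toNat * gauss q n (k - 1) := by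
  lift n to ℕ using hn
  rcases lt_or_ge k 0 with hk | hk
  · rw [gauss_of_neg hk, gauss_of_neg hk, gauss_of_neg (by omega)]
    ring
  lift k to ℕ using hk
  rw [← Nat.cast_succ, show ((n + 1 : ℕ) - k : ℤ).toNat = n + 1 - k by omega]
  rcases k with _ | a
  · rw [Nat.cast_zero, gauss_zero_right hq (by positivity), gauss_zero_right hq (by positivity),
      gauss_of_neg (by omega)]
    ring
  rw [Nat.cast_succ a, add_sub_cancel_right]
  rcases lt_trichotomy n a with hlt | rfl | hgt
  · rw [gauss_of_lt (by omega), gauss_of_lt (by omega), gauss_of_lt (by omega)]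
    ring
  · rw [← Nat.cast_succ, gauss_self hq, gauss_of_lt (by omega), gauss_self hq]
    simp
  obtain ⟨b, rfl⟩ := Nat.exists_eq_add_of_lt hgt
  rw [← Nat.cast_succ, gauss_natCast (by omega), gauss_natCast (by omega),
    gauss_natCast (by omega), show a + b + 1 + 1 - (a + 1) = b + 1 by omega,
    show a + b + 1 - (a + 1) = b by omega, show a + b + 1 - a = b + 1 by omega,
    qPoch_succ q q (a + b + 1), qPoch_succ q q a, qPoch_succ q q b]
  have := qPoch_self_ne_zero hq a
  have := qPoch_self_ne_zero hq b
  have := qPoch_self_ne_zero hq (a + b + 1)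
  have := one_sub_mul_pow_ne_zero hq a
  have := one_sub_mul_pow_ne_zero hq b
  field_simp
  ring

end Gauss

section Formula

variable {K : Type*} [Field K] (x q : K)

def formulaTerm (m n i : ℕ) : K :=
  q ^ (i * (i + 1) / 2) * gauss q (n : ℤ) (i : ℤ) *
    gauss q ((n : ℤ) + m - i) ((m : ℤ) - i) * (x - 1) ^ i

def boxFormula (m n : ℕ) : K :=
  ∑ i ∈ Finset.range (m + 1), formulaTerm x q m n i

variable {x q}

theorem formulaTerm_of_lt {m n i : ℕ} (h : m < i) : formulaTerm x q m n i = 0 := by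
  rw [formulaTerm, gauss_of_neg (n := (n : ℤ) + m - i) (by omega)]
  ring

theorem formulaTerm_succ_succ_zero (hq : ¬ IsOfFinOrder q) (m n : ℕ) :
    formulaTerm x q (m + 1) (n + 1) 0 =
      formulaTerm x q (m + 1) n 0 + q ^ (n + 1) * formulaTerm x q m (n + 1) 0 := by
  simp only [formulaTerm]
  push_cast
  rw [show (n : ℤ) + 1 + (m + 1) - 0 = n + m + 1 + 1 by ring,
    show (n : ℤ) + (m + 1) - 0 = n + m + 1 by ring,
    show (n : ℤ) + 1 + m - 0 = n + m + 1 by ring,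
    show (m : ℤ) - 0 = m + 1 - 1 by ring, sub_zero,
    gauss_succ_left hq (n := (n : ℤ) + m + 1) (by positivity),
    show ((n : ℤ) + m + 1 + 1 - (m + 1)).toNat = n + 1 by omega,
    gauss_zero_right hq (by positivity), gauss_zero_right hq (by positivity)]
  ring

theorem formulaTerm_succ_succ_succ (hq : ¬ IsOfFinOrder q) {m j : ℕ} (hj : j ≤ m) (n : ℕ) :
    formulaTerm x q (m + 1) (n + 1) (j + 1) =
      formulaTerm x q (m + 1) n (j + 1) +
        q ^ (n + 1) * (formulaTerm x q m (n + 1) (j + 1) + (x - 1) * formulaTerm x q m n j) := by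
  simp only [formulaTerm]
  push_cast
  have hN : (0 : ℤ) ≤ n + m - j := by omega
  rw [show (n : ℤ) + 1 + (m + 1) - (j + 1) = n + m - j + 1 by ring,
    show (n : ℤ) + (m + 1) - (j + 1) = n + m - j by ring,
    show (n : ℤ) + 1 + m - (j + 1) = n + m - j by ring,
    show (m : ℤ) + 1 - (j + 1) = m - j by ring, show (m : ℤ) - (j + 1) = m - j - 1 by ring,
    gauss_succ_left hq hN, show ((n : ℤ) + m - j + 1 - (m - j)).toNat = n + 1 by omega,
    gauss_succ_left hq (n := n) (by positivity), add_sub_cancel_right,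
    show (j + 1) * (j + 1 + 1) / 2 = j * (j + 1) / 2 + (j + 1) by
      rw [show (j + 1) * (j + 1 + 1) = j * (j + 1) + 2 * (j + 1) by ring,
        Nat.add_mul_div_left _ _ two_pos]]
  -- the Pascal shift `q^(n-j)` and `q^((j+1)(j+2)/2) = q^(j(j+1)/2) q^(j+1)` combine into `q^(n+1)`
  rcases le_or_gt j n with hjn | hjn
  · rw [show ((n : ℤ) + 1 - (j + 1)).toNat = n - j by omega,
      show n + 1 = (j + 1) + (n - j) by omega]
    ring
  · rw [gauss_of_lt (by omega : (n : ℤ) < j)]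
    ring

theorem boxFormula_succ_succ (hq : ¬ IsOfFinOrder q) (m n : ℕ) :
    boxFormula x q (m + 1) (n + 1) = boxFormula x q (m + 1) n +
      q ^ (n + 1) * (boxFormula x q m (n + 1) + (x - 1) * boxFormula x q m n) := by
  have hshift : ∀ m' n', boxFormula x q m' n' =
      ∑ j ∈ Finset.range m', formulaTerm x q m' n' (j + 1) + formulaTerm x q m' n' 0 :=
    fun _ _ => Finset.sum_range_succ' _ _
  have hlast : formulaTerm x q m (n + 1) (m + 1) = 0 := formulaTerm_of_lt (Nat.lt_succ_self m)
  rw [hshift (m + 1), hshift (m + 1), hshift m (n + 1), ← add_zero (∑ j ∈ Finset.range m, _),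
    ← hlast, ← Finset.sum_range_succ, boxFormula, formulaTerm_succ_succ_zero hq,
    Finset.sum_congr rfl fun j hj =>
      formulaTerm_succ_succ_succ hq (Finset.mem_range_succ_iff.1 hj) n]
  simp only [Finset.sum_add_distrib, ← Finset.mul_sum]
  ring

theorem boxFormula_zero_left (hq : ¬ IsOfFinOrder q) (n : ℕ) : boxFormula x q 0 n = 1 := by
  simp [boxFormula, formulaTerm, gauss_zero_right hq]

theorem boxFormula_zero_right (hq : ¬ IsOfFinOrder q) (m : ℕ) : boxFormula x q m 0 = 1 := by
  rw [boxFormula, Finset.sum_range_succ', Finset.sum_eq_zero fun i _ => ?_]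
  · simp [formulaTerm, gauss_self hq, gauss_zero_right hq le_rfl]
  · rw [formulaTerm, gauss_of_lt (by omega)]
    ring

end Formula

section Box

variable {R : Type*} [CommRing R] (x q : R) {m n : ℕ}

def boxPartitions (m n : ℕ) : Finset (Fin m → Fin (n + 1)) :=
  Finset.univ.filter fun g => ∀ i j : Fin m, i ≤ j → g j ≤ g i

def boxWeight (g : Fin m → Fin (n + 1)) : R :=
  x ^ distCard g * q ^ ∑ i, (g i : ℕ)

theorem boxSum_eq_sum_boxWeight (m n : ℕ) :
    boxSum x q m n = ∑ g ∈ boxPartitions m n, boxWeight x q g :=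
  rfl

theorem mem_boxPartitions {g : Fin m → Fin (n + 1)} : g ∈ boxPartitions m n ↔ Antitone g := by
  simp [boxPartitions, Antitone]

theorem boxSum_zero_left (n : ℕ) : boxSum x q 0 n = 1 := by
  simp [boxSum, distCard]

theorem boxSum_zero_right (m : ℕ) : boxSum x q m 0 = 1 := by
  have hdist (g : Fin m → Fin 1) : distCard g = 0 :=
    Finset.card_eq_zero.2 <| Finset.eq_empty_of_forall_notMem fun v hv => by
      obtain ⟨hv0, i, -, rfl⟩ := Finset.mem_erase.1 hv |>.imp_right Finset.mem_image.1
      exact hv0 (Fin.val_eq_zero _)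
  simp [boxSum, hdist]

theorem boxWeight_castSucc_comp (g : Fin m → Fin (n + 1)) :
    boxWeight x q (Fin.castSucc ∘ g) = boxWeight x q g := by
  simp [boxWeight, distCard]

theorem image_val_cons {k : ℕ} (a : Fin k) (t : Fin m → Fin k) :
    Finset.univ.image (fun i => ((Fin.cons a t : Fin (m + 1) → Fin k) i : ℕ)) =
      insert (a : ℕ) (Finset.univ.image fun i => (t i : ℕ)) := by
  ext v
  simp [Fin.exists_fin_succ, eq_comm]

theorem distCard_cons_last (t : Fin m → Fin (n + 1 + 1)) :
    distCard (Fin.cons (Fin.last (n + 1)) t : Fin (m + 1) → Fin (n + 1 + 1)) =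
      distCard t + if ∀ i, t i ≠ Fin.last (n + 1) then 1 else 0 := by
  rw [distCard, image_val_cons, Fin.val_last, Finset.erase_insert_of_ne n.succ_ne_zero,
    Finset.card_insert_eq_ite, distCard]
  have hmem : n + 1 ∈ (Finset.univ.image fun i => (t i : ℕ)).erase 0 ↔
      ¬ ∀ i, t i ≠ Fin.last (n + 1) := by
    simp only [Finset.mem_erase, Finset.mem_image, Finset.mem_univ, true_and, not_forall, not_not,
      Fin.ext_iff, Fin.val_last]
    exact and_iff_right n.succ_ne_zero
  by_cases h : ∀ i, t i ≠ Fin.last (n + 1)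
  · rw [if_neg (hmem.not.2 (not_not.2 h)), if_pos h]
  · rw [if_pos (hmem.2 h), if_neg h, add_zero]

theorem boxWeight_cons_last (t : Fin m → Fin (n + 1 + 1)) :
    boxWeight x q (Fin.cons (Fin.last (n + 1)) t : Fin (m + 1) → Fin (n + 1 + 1)) =
      q ^ (n + 1) * ((if ∀ i, t i ≠ Fin.last (n + 1) then x else 1) * boxWeight x q t) := by
  rw [boxWeight, boxWeight, distCard_cons_last, Fin.sum_univ_succ, Fin.cons_zero, Fin.val_last]
  simp only [Fin.cons_succ, pow_add]
  split_ifs <;> ring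

theorem forall_ne_last_iff_zero_ne_last {g : Fin (m + 1) → Fin (n + 1)} (hg : Antitone g) :
    (∀ i, g i ≠ Fin.last n) ↔ g 0 ≠ Fin.last n :=
  ⟨fun h => h 0, fun h i hi => h (Fin.last_le_iff.1 (hi ▸ hg (Fin.zero_le i)))⟩

theorem image_castSucc_comp_boxPartitions (m n : ℕ) :
    (boxPartitions m n).image (Fin.castSucc ∘ ·) =
      (boxPartitions m (n + 1)).filter fun g => ∀ i, g i ≠ Fin.last (n + 1) := by
  ext g
  simp only [Finset.mem_image, Finset.mem_filter, mem_boxPartitions]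
  constructor
  · rintro ⟨g', hg', rfl⟩
    exact ⟨Fin.strictMono_castSucc.monotone.comp_antitone hg', fun i => Fin.castSucc_ne_last _⟩
  · rintro ⟨hg, hne⟩
    exact ⟨fun i => (g i).castPred (hne i),
      fun i j hij => Fin.castPred_le_castPred_iff.2 (hg hij),
      funext fun i => Fin.castSucc_castPred _ _⟩

theorem image_cons_last_boxPartitions (m n : ℕ) :
    (boxPartitions m (n + 1)).image (Fin.cons (Fin.last (n + 1))) =
      (boxPartitions (m + 1) (n + 1)).filter fun g => g 0 = Fin.last (n + 1) := by
  ext g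
  simp only [Finset.mem_image, Finset.mem_filter, mem_boxPartitions]
  constructor
  · rintro ⟨t, ht, rfl⟩
    refine ⟨fun i j hij => ?_, Fin.cons_zero _ _⟩
    cases i using Fin.cases with
    | zero => exact Fin.le_last _
    | succ i =>
      cases j using Fin.cases with
      | zero => exact absurd hij (Fin.succ_pos i).not_ge
      | succ j => simpa using ht (Fin.succ_le_succ_iff.1 hij)
  · rintro ⟨hg, h0⟩
    refine ⟨Fin.tail g, hg.comp_monotone (Fin.strictMono_succ.monotone), ?_⟩
    rw [← h0, Fin.cons_self_tail]

theorem sum_boxWeight_filter_ne_last (m n : ℕ) :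
    ∑ g ∈ (boxPartitions m (n + 1)).filter (fun g => ∀ i, g i ≠ Fin.last (n + 1)),
      boxWeight x q g = boxSum x q m n := by
  rw [← image_castSucc_comp_boxPartitions,
    Finset.sum_image fun _ _ _ _ h => Fin.castSucc_injective _ |>.comp_left h,
    boxSum_eq_sum_boxWeight]
  simp only [boxWeight_castSucc_comp]

theorem sum_boxWeight_filter_zero_eq_last (m n : ℕ) :
    ∑ g ∈ (boxPartitions (m + 1) (n + 1)).filter (fun g => g 0 = Fin.last (n + 1)),
      boxWeight x q g = q ^ (n + 1) * (boxSum x q m (n + 1) + (x - 1) * boxSum x q m n) := by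
  have hweight (t : Fin m → Fin (n + 1 + 1)) : boxWeight x q (Fin.cons (Fin.last (n + 1)) t) =
      q ^ (n + 1) * (boxWeight x q t +
        (x - 1) * if ∀ i, t i ≠ Fin.last (n + 1) then boxWeight x q t else 0) := by
    rw [boxWeight_cons_last]
    split_ifs <;> ring
  rw [← image_cons_last_boxPartitions,
    Finset.sum_image fun _ _ _ _ h => Fin.cons_right_injective _ h]
  simp only [hweight]
  rw [← Finset.mul_sum, Finset.sum_add_distrib, ← Finset.mul_sum, ← Finset.sum_filter,
    sum_boxWeight_filter_ne_last, ← boxSum_eq_sum_boxWeight]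

theorem boxSum_succ_succ (m n : ℕ) :
    boxSum x q (m + 1) (n + 1) =
      boxSum x q (m + 1) n + q ^ (n + 1) * (boxSum x q m (n + 1) + (x - 1) * boxSum x q m n) := by
  rw [boxSum_eq_sum_boxWeight,
    ← Finset.sum_filter_not_add_sum_filter (boxPartitions (m + 1) (n + 1))
      fun g : Fin (m + 1) → Fin (n + 1 + 1) => g 0 = Fin.last (n + 1),
    sum_boxWeight_filter_zero_eq_last, ← sum_boxWeight_filter_ne_last x q (m + 1) n]
  congr 1
  refine Finset.sum_congr ?_ fun _ _ => rfl
  exact Finset.filter_congr fun g hg =>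
    (forall_ne_last_iff_zero_ne_last (mem_boxPartitions.1 hg)).symm

end Box

theorem boxSum_eq_boxFormula {K : Type*} [Field K] {x q : K} (hq : ¬ IsOfFinOrder q)
    (m n : ℕ) :
    boxSum x q m n = boxFormula x q m n := by
  induction m generalizing n with
  | zero => rw [boxSum_zero_left, boxFormula_zero_left hq]
  | succ m ihm =>
    induction n with
    | zero => rw [boxSum_zero_right, boxFormula_zero_right hq]
    | succ n ihn => rw [boxSum_succ_succ, boxFormula_succ_succ hq, ihn, ihm, ihm]

theorem MvPolynomial.not_isOfFinOrder_X {σ R : Type*} [CommRing R] [Nontrivial R] (i : σ) :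
    ¬ IsOfFinOrder (MvPolynomial.X i : MvPolynomial σ R) := by
  rw [isOfFinOrder_iff_pow_eq_one]
  rintro ⟨k, hk, h⟩
  simpa [zero_pow hk.ne'] using congrArg (MvPolynomial.eval fun _ => (0 : R)) h

theorem not_isOfFinOrder_qV : ¬ IsOfFinOrder qV := by
  have hinj : Function.Injective
      (algebraMap (MvPolynomial (Fin 2) ℚ) Kxq : MvPolynomial (Fin 2) ℚ →* Kxq) :=
    IsFractionRing.injective _ _
  exact mt (hinj.isOfFinOrder_iff (x := MvPolynomial.X 1)).1 (MvPolynomial.not_isOfFinOrder_X 1)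

theorem stmt_8 (m n : ℕ) :
    boxSum xV qV m n =
      ∑ i ∈ Finset.range (m+1),
        qV ^ (i*(i+1)/2) * gauss qV (n:ℤ) (i:ℤ) * gauss qV ((n:ℤ) + m - i) ((m:ℤ) - i) *
          (xV - 1) ^ i :=
  boxSum_eq_boxFormula not_isOfFinOrder_qV m n
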